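/- Assume L ⊆ Σ^ω is recognized by some deterministic co-Büchi automaton. For all u,v ∈ Σ* with (u,v) not ≈_L ⊥, there exist u₁,u₂ ∈ Σ* with u₁u₂ ∼_L u such that (u₁,u₂v) is pointed. -/

import Mathlib

open Classical

/-- Rank of a transition in a co-Büchi automaton: `one` or `two`. -/
inductive Rk | one | two
deriving DecidableEq

/-- A co-Büchi automaton over alphabet `A` with state type `Q`:
initial states and a transition relation where each transition carries a rank. -/
structure CoBuchi (A : Type) (Q : Type) where
  init : Set Q
  delta : Set (Q × A × Rk × Q)

namespace CoBuchi

variable {A Q : Type}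

/-- Every state has an outgoing transition on every letter. -/
def Total (M : CoBuchi A Q) : Prop :=
  ∀ q a, ∃ r q', (q, a, r, q') ∈ M.delta

/-- The prefix `α[0..n-1]` of an infinite word. -/
def prefW (α : ℕ → A) (n : ℕ) : List A := (List.range n).map α

/-- The infinite word `a·w`. -/
def consW (a : A) (w : ℕ → A) : ℕ → A := fun n => match n with
  | 0 => a
  | Nat.succ k => w k

/-- `L(M,q)`: infinite words having a run from `q` with only finitely many rank-1
transitions. -/
def LangFrom (M : CoBuchi A Q) (q : Q) : Set (ℕ → A) :=
  { w | ∃ (ρ : ℕ → Q) (r : ℕ → Rk), ρ 0 = q ∧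
        (∀ n, (ρ n, w n, r n, ρ (n + 1)) ∈ M.delta) ∧
        ∃ N, ∀ n, N ≤ n → r n = Rk.two }

/-- `L(M)`: the language of the automaton. -/
def Lang (M : CoBuchi A Q) : Set (ℕ → A) :=
  { w | ∃ q ∈ M.init, w ∈ M.LangFrom q }

/-- `q →₂^w q'`: a finite run from `q` to `q'` on `w` using only rank-2 transitions. -/
def SafeReach (M : CoBuchi A Q) : Q → List A → Q → Prop
  | q, [], q' => q = q'
  | q, a :: w, q' => ∃ p, (q, a, Rk.two, p) ∈ M.delta ∧ SafeReach M p w q'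

/-- A finite run from `q` to `q'` on `w` using transitions of any rank. -/
def Reach (M : CoBuchi A Q) : Q → List A → Q → Prop
  | q, [], q' => q = q'
  | q, a :: w, q' => ∃ r p, (q, a, r, p) ∈ M.delta ∧ Reach M p w q'

/-- Safe language of a state. -/
def Lsf (M : CoBuchi A Q) (q : Q) : Set (List A) := { w | ∃ q', M.SafeReach q w q' }

/-- Semantically-deterministic: every transition respects residuals. -/
def SemDet (M : CoBuchi A Q) : Prop :=
  ∀ p a rk q, (p, a, rk, q) ∈ M.delta →
    M.LangFrom q = { w | consW a w ∈ M.LangFrom p }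

/-- Unsafe-saturated: all residual-respecting rank-1 transitions are present. -/
def UnsafeSat (M : CoBuchi A Q) : Prop :=
  ∀ p a q, M.LangFrom q = { w | consW a w ∈ M.LangFrom p } →
    (p, a, Rk.one, q) ∈ M.delta

/-- Safe-deterministic: at most one rank-2 transition per state and letter. -/
def SafeDet (M : CoBuchi A Q) : Prop :=
  ∀ p a q q', (p, a, Rk.two, q) ∈ M.delta → (p, a, Rk.two, q') ∈ M.delta → q = q'

/-- Normalized: every rank-2 transition can be completed to a rank-2 loop. -/
def Normalized (M : CoBuchi A Q) : Prop :=
  ∀ q a q', (q, a, Rk.two, q') ∈ M.delta → ∃ x, M.SafeReach q' x q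

/-- Deterministic: one initial state, exactly one transition per state and letter. -/
def Deterministic (M : CoBuchi A Q) : Prop :=
  (∃! q, q ∈ M.init) ∧ ∀ p a, ∃! t : Rk × Q, (p, a, t.1, t.2) ∈ M.delta

/-- History-deterministic: a strategy `σ : Σ* → Q` resolving the nondeterminism,
whose run on every `α ∈ L(M)` can be ranked with finitely many rank-1 transitions. -/
def HistoryDet (M : CoBuchi A Q) : Prop :=
  ∃ σ : List A → Q, σ [] ∈ M.init ∧
    (∀ w a, ∃ rk, (σ w, a, rk, σ (w ++ [a])) ∈ M.delta) ∧
    ∀ α ∈ M.Lang, ∃ r : ℕ → Rk,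
      (∀ n, (σ (prefW α n), α n, r n, σ (prefW α (n + 1))) ∈ M.delta) ∧
      ∃ N, ∀ n, N ≤ n → r n = Rk.two

/-- `q` and `q'` are in the same safe SCC (mutually reachable via rank-2 runs). -/
def SameSafeSCC (M : CoBuchi A Q) (q q' : Q) : Prop :=
  (∃ x, M.SafeReach q x q') ∧ (∃ y, M.SafeReach q' y q)

end CoBuchi

section LangDefs

variable {A : Type} [Nonempty A]

/-- The infinite word `u·w`. -/
def appW (u : List A) (w : ℕ → A) : ℕ → A :=
  fun n => if h : n < u.length then u.get ⟨n, h⟩ else w (n - u.length)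

/-- The infinite word `v^ω` (arbitrary if `v = ε`). -/
noncomputable def iterW (v : List A) : ℕ → A :=
  fun n =>
    if h : v = [] then Classical.arbitrary A
    else v.get ⟨n % v.length, Nat.mod_lt _ (List.length_pos_iff.mpr h)⟩

/-- The ultimately periodic word `u v^ω`. -/
noncomputable def upW (u v : List A) : ℕ → A := appW u (iterW v)

/-- The right congruence `u ∼_L v`. -/
def SimL (L : Set (ℕ → A)) (u v : List A) : Prop :=
  ∀ w : ℕ → A, appW u w ∈ L ↔ appW v w ∈ L

/-- `(u,v) ≈_L ⊥`: `v ≠ ε` and `u(vx)^ω ∉ L` for all `x` with `uvx ∼_L u`. -/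
def ApproxBot (L : Set (ℕ → A)) (u v : List A) : Prop :=
  v ≠ [] ∧ ∀ x : List A, SimL L (u ++ v ++ x) u → upW u (v ++ x) ∉ L

/-- The safe language of a pair: `sfl(u,v) = {x | (u,vx) not ≈_L ⊥}`. -/
def Sfl (L : Set (ℕ → A)) (u v : List A) : Set (List A) :=
  { x | ¬ ApproxBot L u (v ++ x) }

/-- `(u,v) ≡_L (u',v')`. -/
def EquivL (L : Set (ℕ → A)) (u v u' v' : List A) : Prop :=
  SimL L (u ++ v) (u' ++ v') ∧ Sfl L u v = Sfl L u' v'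

/-- `(u,v)` is pointed. -/
def IsPointed (L : Set (ℕ → A)) (u v : List A) : Prop :=
  ¬ ApproxBot L u v ∧
    ∀ u₁ u₂ : List A, SimL L (u₁ ++ u₂) u → ¬ ApproxBot L u₁ (u₂ ++ v) →
      Sfl L u v = Sfl L u₁ (u₂ ++ v)

/-- `(u,v) ≈_L (u',v')` (for pairs with nonempty second components). -/
def ApproxL (L : Set (ℕ → A)) (u v u' v' : List A) : Prop :=
  SimL L u u' ∧ SimL L (u ++ v) (u' ++ v') ∧
    ∀ x : List A, SimL L (u ++ v ++ x) u →
      (upW u (v ++ x) ∈ L ↔ upW u' (v' ++ x) ∈ L)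

/-- `L` is recognized by some (total) deterministic co-Büchi automaton. -/
def DCWRecognizable (L : Set (ℕ → A)) : Prop :=
  ∃ (Q : Type) (_ : Fintype Q) (M : CoBuchi A Q), M.Deterministic ∧ M.Lang = L

/-- IsPointed pairs. -/
def PointedPair (L : Set (ℕ → A)) : Type :=
  { p : List A × List A // IsPointed L p.1 p.2 }

/-- `≡_L` as a setoid on all pairs. -/
def equivLSetoid (L : Set (ℕ → A)) : Setoid (List A × List A) where
  r p q := EquivL L p.1 p.2 q.1 q.2
  iseqv := {
    refl := fun p => ⟨fun w => Iff.rfl, rfl⟩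
    symm := fun h => ⟨fun w => (h.1 w).symm, h.2.symm⟩
    trans := fun h g => ⟨fun w => (h.1 w).trans (g.1 w), h.2.trans g.2⟩ }

/-- `≡_L` as a setoid on pointed pairs. -/
def canonSetoid (L : Set (ℕ → A)) : Setoid (PointedPair L) where
  r p q := EquivL L p.1.1 p.1.2 q.1.1 q.1.2
  iseqv := {
    refl := fun p => ⟨fun w => Iff.rfl, rfl⟩
    symm := fun h => ⟨fun w => (h.1 w).symm, h.2.symm⟩
    trans := fun h g => ⟨fun w => (h.1 w).trans (g.1 w), h.2.trans g.2⟩ }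

/-- States of the canonical automaton: `≡_L`-classes of pointed pairs. -/
def CanonState (L : Set (ℕ → A)) : Type := Quotient (canonSetoid L)

/-- The class `⟦u,v⟧` of a pointed pair. -/
def cls (L : Set (ℕ → A)) (u v : List A) (h : IsPointed L u v) : CanonState L :=
  Quotient.mk (canonSetoid L) ⟨(u, v), h⟩

/-- The canonical automaton `A_{≡_L}`. -/
def canonAut (L : Set (ℕ → A)) : CoBuchi A (CanonState L) where
  init := { s | ∃ (u v : List A) (h : IsPointed L u v),
              s = cls L u v h ∧ SimL L (u ++ v) [] }
  delta := { t |
    (∃ (u v : List A) (h : IsPointed L u v) (h' : IsPointed L u (v ++ [t.2.1])),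
        ¬ ApproxBot L u (v ++ [t.2.1]) ∧
        t.1 = cls L u v h ∧ t.2.2.1 = Rk.two ∧
        t.2.2.2 = cls L u (v ++ [t.2.1]) h') ∨
    (∃ (u v u' v' : List A) (h : IsPointed L u v) (h' : IsPointed L u' v'),
        SimL L (u ++ v ++ [t.2.1]) (u' ++ v') ∧
        t.1 = cls L u v h ∧ t.2.2.1 = Rk.one ∧ t.2.2.2 = cls L u' v' h') }

/-- `θ(u,v)`: states of `A_{≡_L}` reachable by reading `u` from an initial state
(any ranks) and then `v` via rank-2 transitions only. -/
def theta (L : Set (ℕ → A)) (u v : List A) : Set (CanonState L) :=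
  { q | ∃ p₀ ∈ (canonAut L).init, ∃ p,
          (canonAut L).Reach p₀ u p ∧ (canonAut L).SafeReach p v q }

/-- `(u,v)` is supported: `θ(u,v) ≠ ∅`. -/
def Supported (L : Set (ℕ → A)) (u v : List A) : Prop := (theta L u v).Nonempty

/-- `(u,v)` is double-supported: two distinct states of `θ(u,v)` in the same safe SCC. -/
def DoubleSupported (L : Set (ℕ → A)) (u v : List A) : Prop :=
  ∃ q ∈ theta L u v, ∃ q' ∈ theta L u v, q ≠ q' ∧ (canonAut L).SameSafeSCC q q'

/-- `(u,v)` is single-supported. -/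
def SingleSupported (L : Set (ℕ → A)) (u v : List A) : Prop :=
  Supported L u v ∧ ¬ DoubleSupported L u v

/-- `w` concatenated with itself `m` times. -/
def repCat (w : List A) : ℕ → List A
  | 0 => []
  | Nat.succ m => w ++ repCat w m

end LangDefs

/-!
Among all decompositions `u ∼_L u₁u₂` with `(u₁, u₂v)` not `≈_L ⊥`, choose one whose safe
language `sfl(u₁, u₂v)` is minimal for inclusion. Any further decomposition `u₁ ∼_L ab` has
`sfl(a, bu₂v) ⊆ sfl(u₁, u₂v)`, so by minimality the two are equal, i.e. `(u₁, u₂v)` is pointed.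
The minimum exists because, for `L` recognized by a deterministic co-Büchi automaton, `sfl(a, r)`
only depends on the state reached on `a` and on the finite profile of `r`: the state map of `r`,
the set of states from which `r` is read safely, and whether `r` is empty.
-/

section Words

variable {A : Type}

theorem appW_nil (w : ℕ → A) : appW ([] : List A) w = w := by
  funext n; simp [appW]

theorem appW_cons (a : A) (u : List A) (w : ℕ → A) :
    appW (a :: u) w = CoBuchi.consW a (appW u w) := by
  funext n
  cases n with
  | zero => simp [appW, CoBuchi.consW]
  | succ k =>
    simp only [appW, CoBuchi.consW, List.length_cons, List.get_eq_getElem]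
    by_cases h : k < u.length
    · rw [dif_pos (by omega), dif_pos h, List.getElem_cons_succ]
    · rw [dif_neg (by omega), dif_neg h]
      congr 1
      omega

theorem appW_append (u v : List A) (w : ℕ → A) :
    appW (u ++ v) w = appW u (appW v w) := by
  induction u with
  | nil => rw [List.nil_append, appW_nil]
  | cons a u ih => rw [List.cons_append, appW_cons, appW_cons, ih]

theorem appW_length_add (u : List A) (w : ℕ → A) (n : ℕ) : appW u w (u.length + n) = w n := by
  simp [appW]

variable {L : Set (ℕ → A)}

theorem SimL.symm {u v : List A} (h : SimL L u v) : SimL L v u := fun w => (h w).symm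

theorem SimL.trans {u v t : List A} (h : SimL L u v) (h' : SimL L v t) : SimL L u t :=
  fun w => (h w).trans (h' w)

theorem SimL.append_right {u v : List A} (h : SimL L u v) (s : List A) :
    SimL L (u ++ s) (v ++ s) := by
  intro w
  rw [appW_append, appW_append]
  exact h _

theorem eq_of_eq_appW_self {z : List A} (hz : z ≠ []) {w w' : ℕ → A}
    (hw : w = appW z w) (hw' : w' = appW z w') : w = w' := by
  have hpos := List.length_pos_iff.mpr hz
  funext n
  induction n using Nat.strong_induction_on with
  | _ n ih =>
    rw [hw, hw']
    simp only [appW]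
    split_ifs
    · rfl
    · exact ih _ (by omega)

variable [Nonempty A]

theorem iterW_eq_appW_self {z : List A} (hz : z ≠ []) : iterW z = appW z (iterW z) := by
  funext n
  simp only [iterW, appW, dif_neg hz, List.get_eq_getElem]
  split_ifs with hn
  · simp only [Nat.mod_eq_of_lt hn]
  · simp only [Nat.mod_eq_sub_mod (not_lt.mp hn)]

theorem iterW_append_comm (p s : List A) : iterW (p ++ s) = appW p (iterW (s ++ p)) := by
  rcases eq_or_ne (p ++ s) [] with h | h
  · obtain ⟨rfl, rfl⟩ := List.append_eq_nil_iff.mp h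
    exact (appW_nil _).symm
  · have h' : s ++ p ≠ [] := by simpa [and_comm] using h
    refine eq_of_eq_appW_self h (iterW_eq_appW_self h) ?_
    rw [appW_append, ← appW_append s, ← iterW_eq_appW_self h']

theorem iterW_length_add (z : List A) (n : ℕ) : iterW z (z.length + n) = iterW z n := by
  rcases eq_or_ne z [] with rfl | hz
  · simp
  · conv_lhs => rw [iterW_eq_appW_self hz]
    exact appW_length_add z _ n

theorem iterW_mul_add (z : List A) (j i : ℕ) : iterW z (j * z.length + i) = iterW z i := by
  induction j with
  | zero => simp
  | succ j ih => rw [Nat.succ_mul, Nat.add_comm _ z.length, Nat.add_assoc, iterW_length_add, ih]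

theorem sfl_subset_sfl_of_simL {a b c w : List A} (hab : SimL L (a ++ b) c) :
    Sfl L a (b ++ w) ⊆ Sfl L c w := by
  rintro x hx ⟨hne, hbot⟩
  refine hx ⟨by simp_all, fun t hsim hmem => hbot (t ++ b) ?_ ?_⟩
  · have h₁ := hsim.append_right b
    have h₂ := hab.symm.append_right (w ++ (x ++ (t ++ b)))
    simp only [List.append_assoc] at h₁ h₂ ⊢
    exact h₂.trans (h₁.trans hab)
  · -- `a (bwxt)^ω = ab (wxtb)^ω`, and `ab ∼_L c`
    simp only [upW, List.append_assoc] at hmem ⊢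
    rw [iterW_append_comm b, ← appW_append] at hmem
    simpa only [List.append_assoc] using (hab _).mp hmem

theorem exists_isPointed_of_finite_sfl
    (hfin : (Set.range fun p : List A × List A => Sfl L p.1 p.2).Finite)
    {u v : List A} (h : ¬ ApproxBot L u v) :
    ∃ u₁ u₂ : List A, SimL L (u₁ ++ u₂) u ∧ IsPointed L u₁ (u₂ ++ v) := by
  set F : Set (List A × List A) := {p | SimL L (p.1 ++ p.2) u ∧ ¬ ApproxBot L p.1 (p.2 ++ v)}
  have hu : (u, []) ∈ F := ⟨fun w => by rw [List.append_nil], by simpa using h⟩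
  have himage : ((fun p : List A × List A => Sfl L p.1 (p.2 ++ v)) '' F).Finite :=
    hfin.subset (by rintro _ ⟨p, -, rfl⟩; exact ⟨(p.1, p.2 ++ v), rfl⟩)
  obtain ⟨⟨u₁, u₂⟩, ⟨hsim, hbot⟩, hmin⟩ := himage.exists_minimalFor' _ F ⟨_, hu⟩
  refine ⟨u₁, u₂, hsim, hbot, fun a b hab hbot' => ?_⟩
  have hmem : (a, b ++ u₂) ∈ F :=
    ⟨by simpa only [List.append_assoc] using (hab.append_right u₂).trans hsim,
      by simpa only [List.append_assoc] using hbot'⟩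
  have hsub : Sfl L a (b ++ (u₂ ++ v)) ⊆ Sfl L u₁ (u₂ ++ v) := sfl_subset_sfl_of_simL hab
  exact Set.Subset.antisymm
    (by simpa only [List.append_assoc] using hmin hmem (by simpa only [List.append_assoc] using hsub))
    hsub

end Words

namespace CoBuchi

section Step

variable {A Q : Type} (δ : Q → A → Rk × Q)

def evalFrom (q : Q) (l : List A) : Q := l.foldl (fun p a => (δ p a).2) q

@[simp]
theorem evalFrom_nil (q : Q) : evalFrom δ q [] = q := rfl

@[simp]
theorem evalFrom_cons (q : Q) (a : A) (l : List A) :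
    evalFrom δ q (a :: l) = evalFrom δ (δ q a).2 l := rfl

@[simp]
theorem evalFrom_append (q : Q) (l₁ l₂ : List A) :
    evalFrom δ q (l₁ ++ l₂) = evalFrom δ (evalFrom δ q l₁) l₂ :=
  List.foldl_append

def SafeFrom : Q → List A → Prop
  | _, [] => True
  | q, a :: l => (δ q a).1 = Rk.two ∧ SafeFrom (δ q a).2 l

theorem safeFrom_append (q : Q) (l₁ l₂ : List A) :
    SafeFrom δ q (l₁ ++ l₂) ↔ SafeFrom δ q l₁ ∧ SafeFrom δ (evalFrom δ q l₁) l₂ := by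
  induction l₁ generalizing q with
  | nil => simp [SafeFrom]
  | cons a l ih => simp only [List.cons_append, SafeFrom, ih, evalFrom_cons, and_assoc]

def run (q : Q) (w : ℕ → A) : ℕ → Q
  | 0 => q
  | n + 1 => (δ (run q w n) (w n)).2

def rankAt (q : Q) (w : ℕ → A) (n : ℕ) : Rk := (δ (run δ q w n) (w n)).1

def EventuallySafe (q : Q) (w : ℕ → A) : Prop := ∃ N, ∀ n, N ≤ n → rankAt δ q w n = Rk.two

theorem mem_langFrom_iff {M : CoBuchi A Q}
    (hδ : ∀ q a r p, (q, a, r, p) ∈ M.delta ↔ (r, p) = δ q a) (q : Q) (w : ℕ → A) :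
    w ∈ M.LangFrom q ↔ EventuallySafe δ q w := by
  constructor
  · rintro ⟨ρ, r, hρ₀, hρ, N, hN⟩
    have hstep n : (r n, ρ (n + 1)) = δ (ρ n) (w n) := (hδ _ _ _ _).mp (hρ n)
    have hrun n : ρ n = run δ q w n := by
      induction n with
      | zero => exact hρ₀
      | succ n ih => rw [run, ← ih, ← hstep]
    exact ⟨N, fun n hn => by rw [rankAt, ← hrun, ← hstep, ← hN n hn]⟩
  · rintro ⟨N, hN⟩
    exact ⟨run δ q w, rankAt δ q w, rfl, fun n => (hδ _ _ _ _).mpr rfl, N, hN⟩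

theorem run_consW_succ (q : Q) (a : A) (w : ℕ → A) (n : ℕ) :
    run δ q (consW a w) (n + 1) = run δ (δ q a).2 w n := by
  induction n with
  | zero => rfl
  | succ n ih => rw [run, ih]; rfl

theorem rankAt_consW_succ (q : Q) (a : A) (w : ℕ → A) (n : ℕ) :
    rankAt δ q (consW a w) (n + 1) = rankAt δ (δ q a).2 w n := by
  rw [rankAt, rankAt, run_consW_succ]; rfl

theorem eventuallySafe_consW (q : Q) (a : A) (w : ℕ → A) :
    EventuallySafe δ q (consW a w) ↔ EventuallySafe δ (δ q a).2 w := by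
  constructor
  · rintro ⟨N, hN⟩
    exact ⟨N, fun n hn => by rw [← rankAt_consW_succ]; exact hN _ (by omega)⟩
  · rintro ⟨N, hN⟩
    refine ⟨N + 1, fun n hn => ?_⟩
    obtain ⟨m, rfl⟩ : ∃ m, n = m + 1 := ⟨n - 1, by omega⟩
    rw [rankAt_consW_succ]
    exact hN m (by omega)

theorem eventuallySafe_appW (q : Q) (l : List A) (w : ℕ → A) :
    EventuallySafe δ q (appW l w) ↔ EventuallySafe δ (evalFrom δ q l) w := by
  induction l generalizing q with
  | nil => rw [appW_nil, evalFrom_nil]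
  | cons a l ih => rw [appW_cons, eventuallySafe_consW, ih, evalFrom_cons]

theorem run_appW_length_add (q : Q) (l : List A) (w : ℕ → A) (n : ℕ) :
    run δ q (appW l w) (l.length + n) = run δ (evalFrom δ q l) w n := by
  induction l generalizing q with
  | nil => rw [appW_nil, List.length_nil, Nat.zero_add, evalFrom_nil]
  | cons a l ih =>
    rw [appW_cons, List.length_cons, Nat.add_right_comm, run_consW_succ, ih, evalFrom_cons]

theorem safeFrom_iff_forall_rankAt (q : Q) (l : List A) (w : ℕ → A) :
    SafeFrom δ q l ↔ ∀ i < l.length, rankAt δ q (appW l w) i = Rk.two := by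
  induction l generalizing q with
  | nil => simp [SafeFrom]
  | cons a l ih =>
    rw [SafeFrom, ih, List.length_cons, Nat.forall_lt_succ_left, appW_cons]
    simp only [rankAt_consW_succ]
    rfl

section Periodic

variable [Nonempty A] {z : List A}

theorem rankAt_iterW_length_mul_add (hz : z ≠ []) (q : Q) (j i : ℕ) :
    rankAt δ q (iterW z) (j * z.length + i) =
      rankAt δ ((evalFrom δ · z)^[j] q) (iterW z) i := by
  have hrun (q : Q) (n : ℕ) :
      run δ q (iterW z) (z.length + n) = run δ (evalFrom δ q z) (iterW z) n := by
    conv_lhs => rw [iterW_eq_appW_self hz]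
    exact run_appW_length_add δ q z _ n
  suffices run δ q (iterW z) (j * z.length + i) = run δ ((evalFrom δ · z)^[j] q) (iterW z) i by
    rw [rankAt, rankAt, this, iterW_mul_add]
  induction j generalizing q with
  | zero => simp
  | succ j ih =>
    rw [Nat.succ_mul, Nat.add_comm _ z.length, Nat.add_assoc, hrun, ih,
      Function.iterate_succ_apply]

theorem safeFrom_iff_forall_rankAt_iterW (hz : z ≠ []) (q : Q) :
    SafeFrom δ q z ↔ ∀ i < z.length, rankAt δ q (iterW z) i = Rk.two := by
  conv_rhs => rw [iterW_eq_appW_self hz]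
  exact safeFrom_iff_forall_rankAt δ q z _

/-- After `j` blocks of `z^ω` the run is in state `(evalFrom δ · z)^[j] q`. -/
theorem eventuallySafe_iterW_iff (hz : z ≠ []) (q : Q) :
    EventuallySafe δ q (iterW z) ↔ ∃ j, ∀ k, SafeFrom δ ((evalFrom δ · z)^[k + j] q) z := by
  have hpos : 0 < z.length := List.length_pos_iff.mpr hz
  constructor
  · rintro ⟨N, hN⟩
    refine ⟨N, fun k => (safeFrom_iff_forall_rankAt_iterW δ hz _).mpr fun i _ => ?_⟩
    rw [← rankAt_iterW_length_mul_add δ hz]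
    exact hN _ (le_add_right (Nat.le_mul_of_pos_right _ hpos |>.trans' (by omega)))
  · rintro ⟨j, hj⟩
    refine ⟨j * z.length, fun n hn => ?_⟩
    have hjn : j ≤ n / z.length := (Nat.le_div_iff_mul_le hpos).mpr hn
    rw [← Nat.div_add_mod' n z.length, rankAt_iterW_length_mul_add δ hz,
      ← Nat.sub_add_cancel hjn]
    exact (safeFrom_iff_forall_rankAt_iterW δ hz _).mp (hj _) _ (Nat.mod_lt _ hpos)

end Periodic

def profile (w : List A) : (Q → Q) × (Q → Prop) × Prop :=
  (fun q => evalFrom δ q w, fun q => SafeFrom δ q w, w = [])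

theorem profile_eq_iff {w w' : List A} :
    profile δ w = profile δ w' ↔ (∀ q, evalFrom δ q w = evalFrom δ q w') ∧
      (∀ q, SafeFrom δ q w ↔ SafeFrom δ q w') ∧ (w = [] ↔ w' = []) := by
  simp only [profile, Prod.mk.injEq, funext_iff, eq_iff_iff]

theorem profile_append_congr {w w' : List A} (h : profile δ w = profile δ w') (x : List A) :
    profile δ (w ++ x) = profile δ (w' ++ x) := by
  obtain ⟨he, hs, hn⟩ := (profile_eq_iff δ).mp h
  refine (profile_eq_iff δ).mpr ⟨fun q => ?_, fun q => ?_, ?_⟩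
  · simp only [evalFrom_append, he]
  · simp only [safeFrom_append, hs, he]
  · simp only [List.append_eq_nil_iff, hn]

theorem eventuallySafe_iterW_congr [Nonempty A] {z z' : List A}
    (h : profile δ z = profile δ z') (hz : z ≠ []) (q : Q) :
    EventuallySafe δ q (iterW z) ↔ EventuallySafe δ q (iterW z') := by
  obtain ⟨he, hs, hn⟩ := (profile_eq_iff δ).mp h
  rw [eventuallySafe_iterW_iff δ hz, eventuallySafe_iterW_iff δ (hn.not.mp hz)]
  simp only [he, hs]

end Step

section Language

variable {A Q : Type} {δ : Q → A → Rk × Q} {q₀ : Q} {L : Set (ℕ → A)}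
  (hL : ∀ w, w ∈ L ↔ EventuallySafe δ q₀ w)
include hL

theorem appW_mem_iff (l : List A) (w : ℕ → A) :
    appW l w ∈ L ↔ EventuallySafe δ (evalFrom δ q₀ l) w :=
  (hL _).trans (eventuallySafe_appW δ q₀ l w)

theorem simL_congr {c d c' d' : List A} (hc : evalFrom δ q₀ c = evalFrom δ q₀ c')
    (hd : evalFrom δ q₀ d = evalFrom δ q₀ d') : SimL L c d ↔ SimL L c' d' := by
  simp only [SimL, appW_mem_iff hL, hc, hd]

variable [Nonempty A]

theorem approxBot_congr {a a' w w' : List A} (ha : evalFrom δ q₀ a = evalFrom δ q₀ a')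
    (hw : profile δ w = profile δ w') : ApproxBot L a w ↔ ApproxBot L a' w' := by
  have hne : w ≠ [] ↔ w' ≠ [] := not_congr ((profile_eq_iff δ).mp hw).2.2
  rw [ApproxBot, ApproxBot, ← hne]
  refine and_congr_right fun hw₀ => forall_congr' fun x => imp_congr ?_ (not_congr ?_)
  · have hwx := ((profile_eq_iff δ).mp (profile_append_congr δ hw x)).1
    apply simL_congr hL <;> simp only [evalFrom_append, ha, hwx, List.append_assoc]
  · rw [upW, upW, appW_mem_iff hL, appW_mem_iff hL, ha]
    exact eventuallySafe_iterW_congr δ (profile_append_congr δ hw x) (by simp [hw₀]) _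

theorem sfl_eq_of_profile_eq {a a' r r' : List A} (ha : evalFrom δ q₀ a = evalFrom δ q₀ a')
    (hr : profile δ r = profile δ r') : Sfl L a r = Sfl L a' r' :=
  Set.ext fun x => not_congr (approxBot_congr hL ha (profile_append_congr δ hr x))

theorem finite_range_sfl [Finite Q] :
    (Set.range fun p : List A × List A => Sfl L p.1 p.2).Finite := by
  set key := fun p : List A × List A => (evalFrom δ q₀ p.1, profile δ p.2)
  have hfac : Function.FactorsThrough (fun p : List A × List A => Sfl L p.1 p.2) key :=
    fun p p' h => sfl_eq_of_profile_eq hL (congrArg Prod.fst h) (congrArg Prod.snd h)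
  refine (Set.finite_range (Function.extend key (fun p => Sfl L p.1 p.2) fun _ => ∅)).subset ?_
  rintro _ ⟨p, rfl⟩
  exact ⟨key p, hfac.extend_apply _ p⟩

end Language

theorem Deterministic.exists_step {A Q : Type} {M : CoBuchi A Q} (hM : M.Deterministic) :
    ∃ δ : Q → A → Rk × Q, ∀ q a r p, (q, a, r, p) ∈ M.delta ↔ (r, p) = δ q a := by
  choose δ hδ using fun q a => (hM.2 q a).exists
  refine ⟨δ, fun q a r p => ⟨fun h => (hM.2 q a).unique h (hδ q a), fun h => ?_⟩⟩
  simpa [← h] using hδ q a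

end CoBuchi

theorem DCWRecognizable.finite_range_sfl {A : Type} [Nonempty A] {L : Set (ℕ → A)}
    (hrec : DCWRecognizable L) : (Set.range fun p : List A × List A => Sfl L p.1 p.2).Finite := by
  obtain ⟨Q, _, M, hM, rfl⟩ := hrec
  obtain ⟨q₀, hq₀, hinit⟩ := hM.1
  obtain ⟨δ, hδ⟩ := hM.exists_step
  refine CoBuchi.finite_range_sfl (δ := δ) (q₀ := q₀) fun w => ?_
  rw [← CoBuchi.mem_langFrom_iff δ hδ]
  exact ⟨fun ⟨q, hq, hw⟩ => hinit q hq ▸ hw, fun hw => ⟨q₀, hq₀, hw⟩⟩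

theorem stmt6_general {A : Type} [Nonempty A] (L : Set (ℕ → A))
    (hrec : DCWRecognizable L)
    (u v : List A) (h : ¬ ApproxBot L u v) :
    ∃ u₁ u₂ : List A, SimL L (u₁ ++ u₂) u ∧ IsPointed L u₁ (u₂ ++ v) :=
  exists_isPointed_of_finite_sfl hrec.finite_range_sfl h

/-- every pair that is not `≈_L ⊥` can be extended
(to the left of the looping part) to a pointed pair. -/
theorem stmt6 {A : Type} [Nonempty A] [Fintype A] (L : Set (ℕ → A))
    (hrec : DCWRecognizable L)
    (u v : List A) (h : ¬ ApproxBot L u v) :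
    ∃ u₁ u₂ : List A, SimL L (u₁ ++ u₂) u ∧ IsPointed L u₁ (u₂ ++ v) :=
  stmt6_general L hrec u v h
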